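/- Let K be a Tamari interval and s a segment of the left border of max(K). If the interval Y *_s K is new, then any decomposition of K into new intervals is of the form K_1 / ... / K_k with each K_i new, i.e., all graftings occur along the left border. -/

import Mathlib

/-- Planar binary trees, counted by internal nodes. -/
inductive PBT where
  | leaf : PBT
  | node : PBT → PBT → PBT
deriving DecidableEq

namespace PBT

/-- Number of internal nodes. -/
def size : PBT → ℕ
  | leaf => 0
  | node l r => size l + size r + 1

/-- One rotation step, going up in the Tamari order: a right comb
configuration `a·(b·c)` is replaced by a left comb configuration `(a·b)·c`,
possibly deep inside the tree. -/
inductive Rot : PBT → PBT → Prop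
  | rotate (a b c : PBT) : Rot (node a (node b c)) (node (node a b) c)
  | left {l l' : PBT} (r : PBT) : Rot l l' → Rot (node l r) (node l' r)
  | right (l : PBT) {r r' : PBT} : Rot r r' → Rot (node l r) (node l r')

/-- The Tamari order: the reflexive-transitive closure of rotation. -/
def le (S T : PBT) : Prop := Relation.ReflTransGen Rot S T

/-- The unique tree with one internal node. -/
def Y : PBT := node leaf leaf

/-- `S / T`: graft the root of `S` onto the leftmost leaf of `T`. -/
def graftL : PBT → PBT → PBT
  | S, leaf => S
  | S, node l r => node (graftL S l) r

/-- `T₁ / T₂ / ⋯ / T_k` for a list of trees (the empty graft is the trivial tree). -/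
def listGraft (L : List PBT) : PBT := L.foldr graftL leaf

/-- A (nontrivial) tree is indecomposable if it is not of the form `S / T`
with `S`, `T` both nontrivial. -/
def Indec (T : PBT) : Prop :=
  T ≠ leaf ∧ ¬ ∃ S U : PBT, S ≠ leaf ∧ U ≠ leaf ∧ graftL S U = T

end PBT

/-- A pair `(S,T)` is a Tamari interval when `S ≤ T`. -/
def isItv (p : PBT × PBT) : Prop := PBT.le p.1 p.2

/-- Grafting of intervals, componentwise on minima and maxima:
`J/K = [min J / min K, max J / max K]`. -/
def igraft (p q : PBT × PBT) : PBT × PBT := (PBT.graftL p.1 q.1, PBT.graftL p.2 q.2)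

/-- `I₁ / I₂ / ⋯ / I_k` for a list of intervals. -/
def ilistGraft (L : List (PBT × PBT)) : PBT × PBT := L.foldr igraft (PBT.leaf, PBT.leaf)

/-- An interval is indecomposable if it is nontrivial and is not the graft `J/K`
of two nontrivial intervals. -/
def IndecItv (p : PBT × PBT) : Prop :=
  isItv p ∧ p.1 ≠ PBT.leaf ∧
    ¬ ∃ q r : PBT × PBT, isItv q ∧ isItv r ∧ q.1 ≠ PBT.leaf ∧ r.1 ≠ PBT.leaf ∧
      igraft q r = p

namespace PBT

/-- `Lb T`: the number of segments along the left border of `T`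
(the edges on the path from the root to the leftmost leaf); `Lb Y = 2`. -/
def Lb : PBT → ℕ
  | leaf => 1
  | node l _ => Lb l + 1

/-- `addLeft s T`: attach a new left edge at segment `s` (numbered from the root,
starting at `0`) of the left border of `T`. -/
def addLeft : ℕ → PBT → PBT
  | 0, T => node leaf T
  | _ + 1, leaf => leaf
  | s + 1, node l r => node (addLeft s l) r

end PBT

namespace PBT

/-- Number of leaves of a planar binary tree. -/
def nleaves : PBT → ℕ
  | leaf => 1
  | node l r => nleaves l + nleaves r

/-- Simultaneous substitution of the list `L` of trees for the leaves of `T`,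
from left to right (`leaf` entries leave the corresponding leaf unchanged). -/
def subst : PBT → List PBT → PBT
  | leaf, L => L.headD leaf
  | node l r, L => node (subst l (L.take (nleaves l))) (subst r (L.drop (nleaves l)))

end PBT

mutual
/-- A grafting scheme `G(T,(I_s)_s)`: a planar tree whose internal vertices are
decorated by Tamari intervals `(S,T)`, with one (possibly absent) subtree above
each leaf of the decorating interval. -/
inductive GT where
  | node : PBT → PBT → GTL → GT
/-- The list of children of a vertex of a grafting scheme: each position is
either a leaf of the planar tree (`consLeaf`) or a further internal vertex
(`consNode`). -/
inductive GTL where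
  | nil : GTL
  | consLeaf : GTL → GTL
  | consNode : GT → GTL → GTL
end

mutual
/-- Evaluation of a grafting scheme: graft the minima (resp. the maxima) of the
decorating intervals according to the planar tree, producing a pair of trees. -/
def evalGT : GT → PBT × PBT
  | .node S T cs =>
      (PBT.subst S ((evalL cs).map Prod.fst), PBT.subst T ((evalL cs).map Prod.snd))
def evalL : GTL → List (PBT × PBT)
  | .nil => []
  | .consLeaf cs => (PBT.leaf, PBT.leaf) :: evalL cs
  | .consNode g cs => evalGT g :: evalL cs
end

mutual
/-- Number of internal vertices of a grafting scheme. -/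
def numNodes : GT → ℕ
  | .node _ _ cs => 1 + numNodesL cs
def numNodesL : GTL → ℕ
  | .nil => 0
  | .consLeaf cs => numNodesL cs
  | .consNode g cs => numNodes g + numNodesL cs
end

/-- Length of a children list. -/
def lenGTL : GTL → ℕ
  | .nil => 0
  | .consLeaf cs => lenGTL cs + 1
  | .consNode _ cs => lenGTL cs + 1

mutual
/-- Well-formedness of a grafting scheme: every decoration `(S,T)` is a
nontrivial Tamari interval and has exactly one child position per leaf. -/
inductive WFGT : GT → Prop
  | node {S T : PBT} {cs : GTL} : PBT.le S T → S ≠ PBT.leaf →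
      lenGTL cs = PBT.nleaves S → WFL cs → WFGT (.node S T cs)
inductive WFL : GTL → Prop
  | nil : WFL .nil
  | consLeaf {cs : GTL} : WFL cs → WFL (.consLeaf cs)
  | consNode {g : GT} {cs : GTL} : WFGT g → WFL cs → WFL (.consNode g cs)
end

/-- A Tamari interval is new if it is not the evaluation of a well-formed
grafting scheme with at least two internal vertices. -/
def NewItv (p : PBT × PBT) : Prop :=
  isItv p ∧ p.1 ≠ PBT.leaf ∧
    ¬ ∃ G : GT, WFGT G ∧ 2 ≤ numNodes G ∧ evalGT G = p

mutual
/-- All decorating intervals of the grafting scheme are new. -/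
inductive AllNewGT : GT → Prop
  | node {S T : PBT} {cs : GTL} : NewItv (S, T) → AllNewL cs → AllNewGT (.node S T cs)
inductive AllNewL : GTL → Prop
  | nil : AllNewL .nil
  | consLeaf {cs : GTL} : AllNewL cs → AllNewL (.consLeaf cs)
  | consNode {g : GT} {cs : GTL} : AllNewGT g → AllNewL cs → AllNewL (.consNode g cs)
end

/-- A children list with no internal vertex. -/
def allLeafL : GTL → Prop
  | .nil => True
  | .consLeaf cs => allLeafL cs
  | .consNode _ _ => False

/-- A grafting scheme is a left comb when all graftings occur along the left
border: at each vertex at most the leftmost child is internal, i.e. the scheme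
describes a decomposition `K₁ / ⋯ / K_k`. -/
inductive LeftComb : GT → Prop
  | base {S T : PBT} {cs : GTL} : allLeafL cs → LeftComb (.node S T cs)
  | step {S T : PBT} {g : GT} {cs : GTL} : LeftComb g → allLeafL cs →
      LeftComb (.node S T (.consNode g cs))

/-!
If a decomposition of `K` has a grafting off the left border, it can be collapsed into a
scheme whose root interval `[S, T]` carries nothing on its leftmost leaf and something on
another leaf. Then `max K` and `T` have the same left border, so `Y *_s [S, T]` is an interval
carrying the same children one leaf further right, and its evaluation is `Y *_s K`: a scheme with
at least two vertices, so `Y *_s K` is not new.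
-/

namespace PBT

theorem nleaves_pos (T : PBT) : 0 < nleaves T := by
  induction T with
  | leaf => exact Nat.one_pos
  | node l r ihl _ => simp only [nleaves]; omega

theorem Rot.nleaves_eq {S T : PBT} (h : Rot S T) : nleaves S = nleaves T := by
  induction h with
  | rotate => simp only [nleaves]; omega
  | left _ _ ih | right _ _ ih => simp only [nleaves, ih]

theorem nleaves_eq_of_le {S T : PBT} (h : le S T) : nleaves S = nleaves T := by
  induction h with
  | refl => rfl
  | tail _ hrot ih => exact ih.trans hrot.nleaves_eq

theorem le_refl (T : PBT) : le T T := Relation.ReflTransGen.refl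

theorem le_trans {S T U : PBT} (h₁ : le S T) (h₂ : le T U) : le S U := h₁.trans h₂

theorem le_node {l l' r r' : PBT} (hl : le l l') (hr : le r r') :
    le (node l r) (node l' r') :=
  le_trans (hl.lift (node · r) fun _ _ => Rot.left r) (hr.lift (node l') fun _ _ => Rot.right l')

theorem subst_replicate_leaf (T : PBT) (n : ℕ) : subst T (List.replicate n leaf) = T := by
  induction T generalizing n with
  | leaf => cases n <;> rfl
  | node l r ihl ihr => simp only [subst, List.take_replicate, List.drop_replicate, ihl, ihr]

theorem subst_append {L₁ : List PBT} (T : PBT) (h : nleaves T ≤ L₁.length) (L₂ : List PBT) :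
    subst T (L₁ ++ L₂) = subst T L₁ := by
  induction T generalizing L₁ with
  | leaf =>
    obtain ⟨x, L, rfl⟩ := List.exists_cons_of_length_pos h
    rfl
  | node l r _ ihr =>
    simp only [nleaves] at h
    simp only [subst]
    rw [List.take_append_of_le_length (by omega), List.drop_append_of_le_length (by omega),
      ihr (by simp only [List.length_drop]; omega)]

theorem nleaves_graftL (a S : PBT) : nleaves (graftL a S) + 1 = nleaves a + nleaves S := by
  induction S with
  | leaf => rfl
  | node l r ihl _ => simp only [graftL, nleaves]; omega

theorem subst_graftL {L₁ : List PBT} (a S : PBT) (h : L₁.length = nleaves a) (L₂ : List PBT) :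
    subst (graftL a S) (L₁ ++ L₂) = subst S (subst a L₁ :: L₂) := by
  induction S generalizing L₂ with
  | leaf => exact subst_append a h.ge L₂
  | node l r ihl _ =>
    obtain ⟨k, hk⟩ := Nat.exists_eq_add_one_of_ne_zero (nleaves_pos l).ne'
    have hlen : nleaves (graftL a l) = L₁.length + k := by
      have := nleaves_graftL a l
      omega
    simp only [graftL, subst, hlen, hk, List.take_length_add_append, List.drop_length_add_append,
      List.take_succ_cons, List.drop_succ_cons, ihl]

theorem graftL_eq_subst (a S : PBT) : graftL a S = subst S [a] := by
  induction S with
  | leaf => rfl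
  | node l r ihl _ =>
    have hl : 1 ≤ nleaves l := nleaves_pos l
    simp only [graftL, subst, List.take_of_length_le (l := [a]) hl,
      List.drop_eq_nil_of_le (as := [a]) hl, ihl]
    exact congrArg _ (subst_replicate_leaf r 0).symm

theorem Rot.subst {S T : PBT} (h : Rot S T) (L : List PBT) : Rot (subst S L) (subst T L) := by
  induction h generalizing L with
  | rotate a b c =>
    simp only [PBT.subst, nleaves, List.take_take, List.drop_take, List.drop_drop,
      Nat.min_eq_left (Nat.le_add_right _ _), Nat.add_sub_cancel_left]
    exact Rot.rotate _ _ _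
  | left r hrot ih =>
    simp only [PBT.subst, hrot.nleaves_eq]
    exact Rot.left _ (ih _)
  | right l _ ih => exact Rot.right _ (ih _)

theorem le_subst_left {S T : PBT} (h : le S T) (L : List PBT) : le (subst S L) (subst T L) :=
  h.lift (subst · L) fun _ _ hrot => hrot.subst L

theorem le_subst_right {L₁ L₂ : List PBT} (T : PBT) (h : List.Forall₂ le L₁ L₂) :
    le (subst T L₁) (subst T L₂) := by
  induction T generalizing L₁ L₂ with
  | leaf =>
    cases h with
    | nil => exact le_refl _
    | cons hx _ => exact hx
  | node l r ihl ihr =>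
    exact le_node (ihl (List.forall₂_take _ h)) (ihr (List.forall₂_drop _ h))

theorem graftL_le_graftL {a b S T : PBT} (hab : le a b) (hST : le S T) :
    le (graftL a S) (graftL b T) := by
  rw [graftL_eq_subst, graftL_eq_subst]
  exact le_trans (le_subst_right S (.cons hab .nil)) (le_subst_left hST [b])

theorem graftL_ne_leaf {a : PBT} (S : PBT) (ha : a ≠ leaf) : graftL a S ≠ leaf := by
  cases S with
  | leaf => exact ha
  | node => exact PBT.noConfusion

theorem Lb_subst_leaf_cons (T : PBT) (L : List PBT) : Lb (subst T (leaf :: L)) = Lb T := by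
  induction T generalizing L with
  | leaf => rfl
  | node l r ihl _ =>
    obtain ⟨k, hk⟩ := Nat.exists_eq_add_one_of_ne_zero (nleaves_pos l).ne'
    simp only [subst, Lb, hk, List.take_succ_cons, ihl]

theorem nleaves_addLeft {s : ℕ} {T : PBT} (h : s < Lb T) :
    nleaves (addLeft s T) = nleaves T + 1 := by
  induction T generalizing s with
  | leaf =>
    obtain rfl : s = 0 := by simpa [Lb] using h
    rfl
  | node l r ihl _ =>
    cases s with
    | zero => simp only [addLeft, nleaves]; omega
    | succ s =>
      simp only [Lb] at h
      simp only [addLeft, nleaves, ihl (by omega : s < Lb l)]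
      omega

theorem subst_addLeft {s : ℕ} {T : PBT} (h : s < Lb T) (L : List PBT) :
    subst (addLeft s T) (leaf :: L) = addLeft s (subst T L) := by
  induction T generalizing s L with
  | leaf =>
    obtain rfl : s = 0 := by simpa [Lb] using h
    rfl
  | node l r ihl _ =>
    cases s with
    | zero => rfl
    | succ s =>
      simp only [Lb] at h
      have hs : s < Lb l := by omega
      simp only [addLeft, subst, nleaves_addLeft hs, List.take_succ_cons, List.drop_succ_cons,
        ihl hs]

theorem node_leaf_le_addLeft {s : ℕ} {T : PBT} (h : s < Lb T) : le (node leaf T) (addLeft s T) := by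
  induction T generalizing s with
  | leaf =>
    obtain rfl : s = 0 := by simpa [Lb] using h
    exact le_refl _
  | node l r ihl _ =>
    cases s with
    | zero => exact le_refl _
    | succ s =>
      simp only [Lb] at h
      exact Relation.ReflTransGen.head (Rot.rotate leaf l r)
        (le_node (ihl (by omega : s < Lb l)) (le_refl r))

end PBT

open PBT (leaf node nleaves graftL)

namespace GTL

def append : GTL → GTL → GTL
  | nil, t => t
  | consLeaf cs, t => consLeaf (append cs t)
  | consNode g cs, t => consNode g (append cs t)

instance : Append GTL := ⟨append⟩

theorem consLeaf_append (cs t : GTL) : consLeaf cs ++ t = consLeaf (cs ++ t) := rfl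

theorem consNode_append (g : GT) (cs t : GTL) : consNode g cs ++ t = consNode g (cs ++ t) := rfl

def leaves : ℕ → GTL
  | 0 => nil
  | n + 1 => consLeaf (leaves n)

end GTL

open GTL (consLeaf_append consNode_append)

theorem evalL_append : ∀ cs t : GTL, evalL (cs ++ t) = evalL cs ++ evalL t
  | .nil, _ => rfl
  | .consLeaf cs, t | .consNode _ cs, t => congrArg _ (evalL_append cs t)

theorem lenGTL_append : ∀ cs t : GTL, lenGTL (cs ++ t) = lenGTL cs + lenGTL t
  | .nil, t => (Nat.zero_add _).symm
  | .consLeaf cs, t | .consNode _ cs, t => by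
    simp only [consLeaf_append, consNode_append, lenGTL, lenGTL_append cs t]; omega

theorem allLeafL_append : ∀ cs t : GTL, allLeafL (cs ++ t) ↔ allLeafL cs ∧ allLeafL t
  | .nil, _ => (true_and _).symm.to_iff
  | .consLeaf cs, t => allLeafL_append cs t
  | .consNode _ _, _ => (false_and _).symm.to_iff

theorem WFL.append : ∀ {cs t : GTL}, WFL cs → WFL t → WFL (cs ++ t)
  | .nil, _, _, ht => ht
  | .consLeaf _, _, .consLeaf hcs, ht => .consLeaf (hcs.append ht)
  | .consNode _ _, _, .consNode hg hcs, ht => .consNode hg (hcs.append ht)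

theorem evalL_leaves (n : ℕ) : evalL (GTL.leaves n) = List.replicate n (leaf, leaf) := by
  induction n with
  | zero => rfl
  | succ n ih => simp only [GTL.leaves, evalL, ih, List.replicate_succ]

theorem lenGTL_leaves (n : ℕ) : lenGTL (GTL.leaves n) = n := by
  induction n with
  | zero => rfl
  | succ n ih => simp only [GTL.leaves, lenGTL, ih]

theorem WFL.leaves (n : ℕ) : WFL (GTL.leaves n) := by
  induction n with
  | zero => exact .nil
  | succ n ih => exact .consLeaf ih

theorem length_evalL : ∀ cs : GTL, (evalL cs).length = lenGTL cs
  | .nil => rfl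
  | .consLeaf cs | .consNode _ cs => congrArg (· + 1) (length_evalL cs)

mutual
theorem WFGT.isItv_evalGT : ∀ {G : GT}, WFGT G → isItv (evalGT G)
  | .node S _ _, .node hST _ _ hcs =>
    PBT.le_trans (PBT.le_subst_right S hcs.forall₂_le_evalL) (PBT.le_subst_left hST _)

theorem WFL.forall₂_le_evalL : ∀ {cs : GTL}, WFL cs →
    List.Forall₂ PBT.le ((evalL cs).map Prod.fst) ((evalL cs).map Prod.snd)
  | .nil, _ => .nil
  | .consLeaf _, .consLeaf hcs => .cons (PBT.le_refl leaf) hcs.forall₂_le_evalL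
  | .consNode _ _, .consNode hg hcs => .cons hg.isItv_evalGT hcs.forall₂_le_evalL
end

theorem WFGT.evalGT_fst_ne_leaf : ∀ {G : GT}, WFGT G → (evalGT G).1 ≠ leaf
  | .node (.node _ _) _ _, _ => PBT.noConfusion
  | .node .leaf _ _, .node _ hS _ _ => absurd rfl hS

theorem evalGT_leaves (S T : PBT) (n : ℕ) : evalGT (.node S T (GTL.leaves n)) = (S, T) := by
  simp only [evalGT, evalL_leaves, List.map_replicate, PBT.subst_replicate_leaf]

theorem WFGT.node_evalGT_leaves {g : GT} (hg : WFGT g) :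
    WFGT (.node (evalGT g).1 (evalGT g).2 (GTL.leaves (nleaves (evalGT g).1))) :=
  .node hg.isItv_evalGT hg.evalGT_fst_ne_leaf (lenGTL_leaves _) (.leaves _)

theorem evalGT_consNode {S T a b : PBT} {g : GT} {cs₀ cs : GTL}
    (h₀ : WFGT (.node a b cs₀)) (hg : evalGT g = evalGT (.node a b cs₀)) :
    evalGT (.node S T (.consNode g cs)) = evalGT (.node (graftL a S) (graftL b T) (cs₀ ++ cs)) := by
  obtain ⟨hab, -, hlen, -⟩ := h₀
  have hlen' : (evalL cs₀).length = nleaves a := (length_evalL cs₀).trans hlen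
  simp only [evalGT, evalL, hg, evalL_append, List.map_append, List.map_cons]
  rw [PBT.subst_graftL a S (by simp [hlen']),
    PBT.subst_graftL b T (by simp [hlen', PBT.nleaves_eq_of_le hab])]

theorem WFGT.graftL_of_consNode {a b S T : PBT} {cs₀ cs : GTL} {g : GT} :
    WFGT (.node a b cs₀) → WFGT (.node S T (.consNode g cs)) →
      WFGT (.node (graftL a S) (graftL b T) (cs₀ ++ cs))
  | .node hab ha hlen₀ hcs₀, .node hST _ hlen (.consNode _ hcs) => by
    refine .node (PBT.graftL_le_graftL hab hST) (PBT.graftL_ne_leaf S ha) ?_ (hcs₀.append hcs)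
    have := PBT.nleaves_graftL a S
    simp only [lenGTL] at hlen
    rw [lenGTL_append]
    omega

def HasInnerGraft (K : PBT × PBT) : Prop :=
  ∃ (S T : PBT) (cs : GTL), WFGT (.node S T (.consLeaf cs)) ∧ ¬ allLeafL cs ∧
    evalGT (.node S T (.consLeaf cs)) = K

theorem hasInnerGraft_evalGT_of_not_leftComb :
    ∀ {G : GT}, WFGT G → ¬ LeftComb G → HasInnerGraft (evalGT G)
  | .node _ _ .nil, _, hLC => absurd (.base trivial) hLC
  | .node S T (.consLeaf cs), hG, hLC => ⟨S, T, cs, hG, fun h => hLC (.base h), rfl⟩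
  | .node S T (.consNode g cs), hG@(.node _ _ _ (.consNode hg _)), hLC => by
    by_cases hcs : allLeafL cs
    · obtain ⟨a, b, cs₀, h₀, hcs₀, hg_eq⟩ :=
        hasInnerGraft_evalGT_of_not_leftComb hg fun h => hLC (.step h hcs)
      exact ⟨graftL a S, graftL b T, cs₀ ++ cs, h₀.graftL_of_consNode hG,
        fun h => hcs₀ ((allLeafL_append cs₀ cs).1 h).1, (evalGT_consNode h₀ hg_eq.symm).symm⟩
    · -- collapse the first child to a single vertex and absorb it into the root
      have h₀ := hg.node_evalGT_leaves
      obtain ⟨k, hk⟩ := Nat.exists_eq_add_one_of_ne_zero (PBT.nleaves_pos (evalGT g).1).ne'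
      rw [hk] at h₀
      exact ⟨graftL (evalGT g).1 S, graftL (evalGT g).2 T, GTL.leaves k ++ cs,
        h₀.graftL_of_consNode hG, fun h => hcs ((allLeafL_append _ cs).1 h).2,
        (evalGT_consNode h₀ (evalGT_leaves _ _ _).symm).symm⟩

theorem numNodes_pos : ∀ G : GT, 0 < numNodes G
  | .node _ _ _ => by simp only [numNodes]; omega

theorem numNodesL_pos_of_not_allLeafL : ∀ {cs : GTL}, ¬ allLeafL cs → 0 < numNodesL cs
  | .nil, h => absurd trivial h
  | .consLeaf cs, h => numNodesL_pos_of_not_allLeafL (cs := cs) h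
  | .consNode g _, _ => Nat.lt_add_right _ (numNodes_pos g)

theorem HasInnerGraft.not_newItv_addLeft {K : PBT × PBT} (hK : HasInnerGraft K) {s : ℕ}
    (hs : s < PBT.Lb K.2) : ¬ NewItv (node leaf K.1, PBT.addLeft s K.2) := by
  obtain ⟨S, T, cs, ⟨hST, -, hlen, hcs⟩, hcs_leaf, rfl⟩ := hK
  have hsT : s < PBT.Lb T := by simpa [evalGT, evalL, PBT.Lb_subst_leaf_cons] using hs
  refine fun hnew => hnew.2.2 ⟨.node (node leaf S) (PBT.addLeft s T) (.consLeaf (.consLeaf cs)),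
    .node ?_ PBT.noConfusion ?_ (.consLeaf hcs), ?_, ?_⟩
  · exact PBT.le_trans (PBT.le_node (PBT.le_refl leaf) hST) (PBT.node_leaf_le_addLeft hsT)
  · simp only [lenGTL, nleaves] at hlen ⊢
    omega
  · have := numNodesL_pos_of_not_allLeafL hcs_leaf
    simp only [numNodes, numNodesL]
    omega
  · simp only [evalGT, evalL, List.map_cons, PBT.subst_addLeft hsT]
    rfl

/-- If `Y *ₛ K` is new, then every découpage en nouveaux of `K` is of the form
`K₁ / ⋯ / K_k` with all `Kᵢ` new: all graftings occur along the left border. -/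
theorem decoupage_of_new_extension_is_left_comb (K : PBT × PBT)
    (hK : isItv K) (hK1 : K.1 ≠ PBT.leaf) (s : ℕ) (hs : s < PBT.Lb K.2)
    (hnew : NewItv (PBT.node PBT.leaf K.1, PBT.addLeft s K.2)) :
    ∀ G : GT, WFGT G → AllNewGT G → evalGT G = K → LeftComb G := by
  rintro G hG - rfl
  by_contra hLC
  exact (hasInnerGraft_evalGT_of_not_leftComb hG hLC).not_newItv_addLeft hs hnew
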